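/- The map (q, Q) ↦ [[q a q̄, q c],[q b q̄, q d]] defines a group action of the unit quaternions S^3 on Sp(2): it preserves the condition Q̄ᵀ Q = id, sends 1 to the identity transformation, and is compatible with multiplication in S^3. -/

import Mathlib

open Matrix

/-- The Gromoll–Meyer action of a quaternion q on a 2×2 quaternionic matrix:
q·[[a,c],[b,d]] = [[q a q̄, q c],[q b q̄, q d]]. -/
noncomputable def gmAct (q : Quaternion ℝ) (Q : Matrix (Fin 2) (Fin 2) (Quaternion ℝ)) :
    Matrix (Fin 2) (Fin 2) (Quaternion ℝ) :=
  Matrix.of ![![q * Q 0 0 * star q, q * Q 0 1], ![q * Q 1 0 * star q, q * Q 1 1]]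

/-!
The action is `Q ↦ diag(q, q) · Q · diag(q̄, 1)`. For a unit quaternion both diagonal factors
satisfy `Dᴴ D = 1`, and such matrices are closed under products; the factorisation is also
visibly multiplicative in `q`, the right factor reversing the order as `q₁q₂` conjugates to
`q̄₂q̄₁`.
-/

theorem star_mul_self_mul_eq_one {R : Type*} [Monoid R] [StarMul R] {a b : R}
    (ha : star a * a = 1) (hb : star b * b = 1) : star (a * b) * (a * b) = 1 := by
  rw [star_mul, mul_assoc, ← mul_assoc (star a), ha, one_mul, hb]

theorem conjTranspose_diagonal_mul_self {n R : Type*} [Fintype n] [DecidableEq n] [Semiring R] [StarRing R]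
    (v : n → R) : (diagonal v)ᴴ * diagonal v = diagonal fun i => star (v i) * v i := by
  rw [diagonal_conjTranspose, diagonal_mul_diagonal]
  rfl

theorem gmAct_eq_diagonal_mul_mul_diagonal (q : Quaternion ℝ)
    (Q : Matrix (Fin 2) (Fin 2) (Quaternion ℝ)) :
    gmAct q Q = diagonal (fun _ => q) * Q * diagonal ![star q, 1] := by
  refine Matrix.ext fun i j => ?_
  fin_cases i <;> fin_cases j <;> simp [gmAct, mul_diagonal, diagonal_mul]

theorem gmAct_conjTranspose_mul_self {q : Quaternion ℝ} (hsq : star q * q = 1)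
    (hqs : q * star q = 1) {Q : Matrix (Fin 2) (Fin 2) (Quaternion ℝ)} (hQ : Qᴴ * Q = 1) :
    (gmAct q Q)ᴴ * gmAct q Q = 1 := by
  have hL : (diagonal fun _ : Fin 2 => q)ᴴ * diagonal (fun _ => q) = 1 := by
    rw [conjTranspose_diagonal_mul_self, hsq, diagonal_one]
  have hR : (diagonal ![star q, 1])ᴴ * diagonal ![star q, 1] = 1 := by
    rw [conjTranspose_diagonal_mul_self, ← diagonal_one]
    congr 1
    funext i
    fin_cases i <;> simp [hqs]
  rw [gmAct_eq_diagonal_mul_mul_diagonal]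
  exact star_mul_self_mul_eq_one (star_mul_self_mul_eq_one hL hQ) hR

theorem gmAct_one (Q : Matrix (Fin 2) (Fin 2) (Quaternion ℝ)) : gmAct 1 Q = Q := by
  have hR : diagonal ![star (1 : Quaternion ℝ), 1] = 1 := by
    rw [← diagonal_one]
    congr 1
    funext i
    fin_cases i <;> simp
  rw [gmAct_eq_diagonal_mul_mul_diagonal, hR, diagonal_one, one_mul, mul_one]

theorem gmAct_mul (q₁ q₂ : Quaternion ℝ) (Q : Matrix (Fin 2) (Fin 2) (Quaternion ℝ)) :
    gmAct (q₁ * q₂) Q = gmAct q₁ (gmAct q₂ Q) := by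
  have hL : diagonal (fun _ : Fin 2 => q₁ * q₂) =
      diagonal (fun _ => q₁) * diagonal (fun _ => q₂) := by
    rw [diagonal_mul_diagonal]
  have hR : diagonal ![star (q₁ * q₂), 1] = diagonal ![star q₂, 1] * diagonal ![star q₁, 1] := by
    rw [diagonal_mul_diagonal]
    congr 1
    funext i
    fin_cases i <;> simp
  simp only [gmAct_eq_diagonal_mul_mul_diagonal, hL, hR, Matrix.mul_assoc]

/-- gmAct defines an action of the unit quaternions S³ on Sp(2):
it preserves Q̄ᵀQ = id, the identity of S³ acts trivially, and it is
compatible with multiplication. -/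
theorem gmAct_is_action :
    (∀ (q : Quaternion ℝ), star q * q = 1 → q * star q = 1 →
      ∀ Q : Matrix (Fin 2) (Fin 2) (Quaternion ℝ), Qᴴ * Q = 1 →
        (gmAct q Q)ᴴ * gmAct q Q = 1) ∧
    (∀ Q : Matrix (Fin 2) (Fin 2) (Quaternion ℝ), gmAct 1 Q = Q) ∧
    (∀ (q₁ q₂ : Quaternion ℝ), star q₁ * q₁ = 1 → star q₂ * q₂ = 1 →
      ∀ Q : Matrix (Fin 2) (Fin 2) (Quaternion ℝ),
        gmAct (q₁ * q₂) Q = gmAct q₁ (gmAct q₂ Q)) :=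
  ⟨fun _ hsq hqs _ hQ => gmAct_conjTranspose_mul_self hsq hqs hQ, gmAct_one,
    fun q₁ q₂ _ _ Q => gmAct_mul q₁ q₂ Q⟩
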